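/- arXiv:2202.07425 — 3 statements merged into one kernel-verified Lean document; each statement's English description precedes it below -/
import Mathlib

section
/- Let m ∈ ℕ (m ≥ 1). The activation function Φ is even (Φ(x) = Φ(−x) for all x ∈ ℝ), strictly positive (Φ(x) > 0 for all x ∈ ℝ), strictly decreasing on (0,+∞) and strictly increasing on (−∞,0), attains its maximum Φ(0) = 1/(2·2^{1/(2m)}), and satisfies lim_{x→+∞} Φ(x) = 0 and lim_{x→−∞} Φ(x) = 0. -/
/-! φ is odd with φ'(x) = (1 + x^{2m})^{-1-1/(2m)} > 0, a function decreasing in |x|. Hence Φ is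
even and positive, and for x > 0 we have |x - 1| < x + 1, so Φ'(x) = (φ'(x+1) - φ'(x-1))/4 < 0.
Evenness transfers the monotonicity, the maximum and the limit to the negative half-line, and on
[0, ∞) one has φ(x) = (1 - (1 + x^{2m})⁻¹)^{1/(2m)} → 1, whence Φ → 0. -/

open scoped BigOperators
open Real Filter

/-- The algebraic sigmoid function `φ(x) = x / (1 + x^(2m))^(1/(2m))`. -/
noncomputable def phi (m : ℕ) (x : ℝ) : ℝ :=
  x / (1 + x ^ (2 * m)) ^ ((1 : ℝ) / (2 * m))

/-- The activation function `Φ(x) = (φ(x+1) - φ(x-1))/4`. -/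
noncomputable def Phi (m : ℕ) (x : ℝ) : ℝ :=
  (phi m (x + 1) - phi m (x - 1)) / 4

open Set

namespace Function.Even

variable {α β : Type*} [AddCommGroup α] [PartialOrder α] [IsOrderedAddMonoid α] {f : α → β}

theorem strictMonoOn_Iic [Preorder β] (hf : f.Even) (h : StrictAntiOn f (Ici 0)) :
    StrictMonoOn f (Iic 0) := fun a ha b hb hab => by
  rw [← hf a, ← hf b]
  exact h (neg_nonneg.mpr hb) (neg_nonneg.mpr ha) (neg_lt_neg hab)

theorem tendsto_atBot {l : Filter β} (hf : f.Even) (h : Tendsto f atTop l) :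
    Tendsto f atBot l :=
  (h.comp tendsto_neg_atBot_atTop).congr fun x => hf x

end Function.Even

theorem Function.Even.le_apply_zero {α β : Type*} [AddCommGroup α] [LinearOrder α]
    [IsOrderedAddMonoid α] [Preorder β] {f : α → β} (hf : f.Even) (h : AntitoneOn f (Ici 0))
    (x : α) : f x ≤ f 0 := by
  rcases le_total 0 x with hx | hx
  · exact h self_mem_Ici hx hx
  · rw [← hf x]
    exact h self_mem_Ici (neg_nonneg.mpr hx) (neg_nonneg.mpr hx)

variable {m : ℕ}

theorem one_add_pow_two_mul_pos (m : ℕ) (x : ℝ) : 0 < 1 + x ^ (2 * m) := by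
  have := (even_two_mul m).pow_nonneg x
  linarith

theorem phi_odd (m : ℕ) : (phi m).Odd := fun x => by
  rw [phi, phi, (even_two_mul m).neg_pow, neg_div]

theorem Phi_even (m : ℕ) : (Phi m).Even := fun x => by
  rw [Phi, Phi, show -x + 1 = -(x - 1) by ring, show -x - 1 = -(x + 1) by ring,
    phi_odd, phi_odd]
  ring

theorem Phi_zero (m : ℕ) : Phi m 0 = 1 / (2 * (2 : ℝ) ^ ((1 : ℝ) / (2 * m))) := by
  have phi_one : phi m 1 = 1 / (2 : ℝ) ^ ((1 : ℝ) / (2 * m)) := by norm_num [phi]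
  rw [Phi, zero_add, zero_sub, phi_odd, phi_one]
  ring

noncomputable def phiDeriv (m : ℕ) (x : ℝ) : ℝ :=
  (1 + x ^ (2 * m)) ^ (-(1 + (1 : ℝ) / (2 * m)))

theorem phiDeriv_pos (m : ℕ) (x : ℝ) : 0 < phiDeriv m x :=
  rpow_pos_of_pos (one_add_pow_two_mul_pos m x) _

theorem phiDeriv_lt_of_abs_lt (hm : m ≠ 0) {x y : ℝ} (h : |x| < |y|) :
    phiDeriv m y < phiDeriv m x := by
  have hpow : x ^ (2 * m) < y ^ (2 * m) := by
    rw [← pow_abs_two_mul x, ← pow_abs_two_mul y]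
    exact pow_lt_pow_left₀ h (abs_nonneg x) (by omega)
  have hexp : -(1 + (1 : ℝ) / (2 * m)) < 0 := by
    have : (0 : ℝ) < 1 / (2 * m) := by positivity
    linarith
  exact rpow_lt_rpow_of_neg (one_add_pow_two_mul_pos m x) (by linarith) hexp

theorem phi_hasDerivAt (hm : m ≠ 0) (x : ℝ) : HasDerivAt (phi m) (phiDeriv m x) x := by
  set c : ℝ := 1 / (2 * m) with hc
  have hu : 0 < 1 + x ^ (2 * m) := one_add_pow_two_mul_pos m x
  have hphi : phi m = fun y => y * (1 + y ^ (2 * m)) ^ (-c) := by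
    funext y
    rw [phi, rpow_neg (one_add_pow_two_mul_pos m y).le, div_eq_mul_inv]
  have hinner : HasDerivAt (fun y : ℝ => 1 + y ^ (2 * m)) (↑(2 * m) * x ^ (2 * m - 1)) x := by
    simpa using (hasDerivAt_pow (2 * m) x).const_add 1
  have hderiv : HasDerivAt (fun y => y * (1 + y ^ (2 * m)) ^ (-c)) _ x :=
    (hasDerivAt_id' x).mul (hinner.rpow_const (p := -c) (Or.inl hu.ne'))
  rw [hphi]
  convert hderiv using 1
  set u := 1 + x ^ (2 * m)
  have hsplit : u ^ (-c) = u ^ (-c - 1) * u := by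
    rw [← rpow_add_one hu.ne', sub_add_cancel]
  have hx : x * x ^ (2 * m - 1) = x ^ (2 * m) := by
    rw [← pow_succ', Nat.sub_add_cancel (by omega)]
  have hc2m : c * (2 * m) = 1 := by rw [hc]; field_simp
  rw [phiDeriv, ← hc, hsplit, show -(1 + c) = -c - 1 by ring]
  push_cast
  linear_combination u ^ (-c - 1) * (x ^ (2 * m) * hc2m + c * (2 * m) * hx)

theorem Phi_hasDerivAt (hm : m ≠ 0) (x : ℝ) :
    HasDerivAt (Phi m) ((phiDeriv m (x + 1) - phiDeriv m (x - 1)) / 4) x :=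
  (((phi_hasDerivAt hm (x + 1)).comp_add_const x 1).sub
    ((phi_hasDerivAt hm (x - 1)).comp_sub_const x 1)).div_const 4

theorem phi_strictMono (hm : m ≠ 0) : StrictMono (phi m) :=
  strictMono_of_hasDerivAt_pos (phi_hasDerivAt hm) (phiDeriv_pos m)

theorem Phi_pos (hm : m ≠ 0) (x : ℝ) : 0 < Phi m x := by
  have := phi_strictMono hm (show x - 1 < x + 1 by linarith)
  rw [Phi]
  linarith

theorem Phi_strictAntiOn_Ici (hm : m ≠ 0) : StrictAntiOn (Phi m) (Ici 0) := by
  refine strictAntiOn_of_hasDerivWithinAt_neg (convex_Ici 0)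
    (fun x _ => (Phi_hasDerivAt hm x).continuousAt.continuousWithinAt)
    (fun x _ => (Phi_hasDerivAt hm x).hasDerivWithinAt) fun x hx => ?_
  rw [interior_Ici, mem_Ioi] at hx
  have : |x - 1| < |x + 1| := by
    rw [abs_of_pos (by linarith : 0 < x + 1), abs_lt]
    constructor <;> linarith
  linarith [phiDeriv_lt_of_abs_lt hm this]

theorem phi_eq_rpow_of_nonneg (hm : m ≠ 0) {x : ℝ} (hx : 0 ≤ x) :
    phi m x = (1 - (1 + x ^ (2 * m))⁻¹) ^ ((1 : ℝ) / (2 * m)) := by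
  have hu := one_add_pow_two_mul_pos m x
  have hroot : (x ^ (2 * m)) ^ ((1 : ℝ) / (2 * m)) = x := by
    rw [show (1 : ℝ) / (2 * m) = ((2 * m : ℕ) : ℝ)⁻¹ by push_cast; rw [one_div]]
    exact pow_rpow_inv_natCast hx (by omega)
  rw [show 1 - (1 + x ^ (2 * m))⁻¹ = x ^ (2 * m) / (1 + x ^ (2 * m)) by field_simp; ring,
    div_rpow (by positivity) hu.le, hroot, phi]

theorem phi_tendsto_atTop (hm : m ≠ 0) : Tendsto (phi m) atTop (nhds 1) := by
  have hpow : Tendsto (fun x : ℝ => 1 + x ^ (2 * m)) atTop atTop :=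
    tendsto_atTop_add_const_left _ 1 (tendsto_pow_atTop (by omega))
  have := ((tendsto_const_nhds (x := (1 : ℝ))).sub hpow.inv_tendsto_atTop).rpow_const
    (p := (1 : ℝ) / (2 * m)) (Or.inl (by norm_num))
  rw [sub_zero, one_rpow] at this
  exact this.congr' <| (eventually_ge_atTop 0).mono fun x hx =>
    (phi_eq_rpow_of_nonneg hm hx).symm

theorem Phi_tendsto_atTop (hm : m ≠ 0) : Tendsto (Phi m) atTop (nhds 0) := by
  have hshift (a : ℝ) : Tendsto (fun x => phi m (x + a)) atTop (nhds 1) :=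
    (phi_tendsto_atTop hm).comp (tendsto_atTop_add_const_right _ a tendsto_id)
  have := ((hshift 1).sub (hshift (-1))).div_const 4
  rw [sub_self, zero_div] at this
  exact this.congr fun x => by rw [Phi, sub_eq_add_neg x 1]

theorem Phi_properties (m : ℕ) (hm : 1 ≤ m) :
    (∀ x : ℝ, Phi m x = Phi m (-x)) ∧
    (∀ x : ℝ, 0 < Phi m x) ∧
    StrictAntiOn (Phi m) (Set.Ioi (0 : ℝ)) ∧
    StrictMonoOn (Phi m) (Set.Iio (0 : ℝ)) ∧
    Phi m 0 = 1 / (2 * (2 : ℝ) ^ ((1 : ℝ) / (2 * m))) ∧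
    (∀ x : ℝ, Phi m x ≤ Phi m 0) ∧
    Tendsto (Phi m) atTop (nhds 0) ∧
    Tendsto (Phi m) atBot (nhds 0) := by
  have hm : m ≠ 0 := Nat.one_le_iff_ne_zero.mp hm
  have hanti := Phi_strictAntiOn_Ici hm
  have heven := Phi_even m
  exact ⟨fun x => (heven x).symm, Phi_pos hm, hanti.mono Ioi_subset_Ici_self,
    (heven.strictMonoOn_Iic hanti).mono Iio_subset_Iic_self, Phi_zero m,
    heven.le_apply_zero hanti.antitoneOn, Phi_tendsto_atTop hm,
    heven.tendsto_atBot (Phi_tendsto_atTop hm)⟩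
end

section
/- Let m ∈ ℕ (m ≥ 1), [a,b] ⊂ ℝ, and n ∈ ℕ with ⌈na⌉ ≤ ⌊nb⌋. Then 1 − ∑_{k=⌈na⌉}^{⌊nb⌋} Φ(nb − k) > Φ(1) = 1/(2(1 + 2^{2m})^{1/(2m)}) > 0, and likewise 1 − ∑_{k=⌈na⌉}^{⌊nb⌋} Φ(na − k) > Φ(1) > 0. In particular, lim_{n→∞} ∑_{k=⌈na⌉}^{⌊nb⌋} Φ(nx − k) ≠ 1 for at least some x ∈ [a,b]. -/
open scoped BigOperators
open Real Filter

lemma pow_even_nonneg (m : ℕ) (x : ℝ) : 0 ≤ x ^ (2 * m) := by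
  rw [pow_mul]; positivity

lemma denom_pos (m : ℕ) (x : ℝ) : 0 < ((1:ℝ) + x ^ (2 * m)) ^ ((1 : ℝ) / (2 * m)) := by
  apply Real.rpow_pos_of_pos
  have := pow_even_nonneg m x
  linarith

lemma abs_phi_lt_one (m : ℕ) (hm : 1 ≤ m) (x : ℝ) : |phi m x| < 1 := by
  have hD := denom_pos m x
  have hmm : (0:ℝ) < 2 * m := by positivity
  have hx : |x| < ((1:ℝ) + x ^ (2 * m)) ^ ((1 : ℝ) / (2 * m)) := by
    have h1 : (x ^ (2 * m) : ℝ) < 1 + x ^ (2 * m) := by linarith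
    have h2 := Real.rpow_lt_rpow (pow_even_nonneg m x) h1 (by positivity : (0:ℝ) < 1 / (2 * m))
    calc |x| = (x ^ (2 * m)) ^ ((1 : ℝ) / (2 * m)) := by
          rw [show (x ^ (2 * m) : ℝ) = |x| ^ (2 * m) by
                rw [pow_abs, abs_of_nonneg (pow_even_nonneg m x)],
              ← Real.rpow_natCast |x| (2 * m), ← Real.rpow_mul (abs_nonneg x)]
          have : ((2 * m : ℕ) : ℝ) * ((1:ℝ) / (2 * m)) = 1 := by
            push_cast
            field_simp
          rw [this, Real.rpow_one]
      _ < _ := h2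
  rw [phi, abs_div, abs_of_pos hD, div_lt_one hD]
  exact hx

lemma phi_lt_one (m : ℕ) (hm : 1 ≤ m) (x : ℝ) : phi m x < 1 :=
  lt_of_le_of_lt (le_abs_self _) (abs_phi_lt_one m hm x)

lemma neg_one_lt_phi (m : ℕ) (hm : 1 ≤ m) (x : ℝ) : -1 < phi m x := by
  have := abs_phi_lt_one m hm x
  have := abs_lt.mp this
  linarith [this.1]

lemma phi_nonneg (m : ℕ) {x : ℝ} (hx : 0 ≤ x) : 0 ≤ phi m x :=
  div_nonneg hx (denom_pos m x).le

lemma phi_nonpos (m : ℕ) {x : ℝ} (hx : x ≤ 0) : phi m x ≤ 0 :=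
  div_nonpos_of_nonpos_of_nonneg hx (denom_pos m x).le

lemma phi_zero (m : ℕ) : phi m 0 = 0 := by simp [phi]

lemma Phi_one_eq (m : ℕ) :
    Phi m 1 = 1 / (2 * ((1 : ℝ) + 2 ^ (2 * m)) ^ ((1 : ℝ) / (2 * m))) := by
  have hD := denom_pos m (2 : ℝ)
  rw [Phi, show (1:ℝ) + 1 = 2 by norm_num, show (1:ℝ) - 1 = 0 by norm_num, phi_zero, phi]
  field_simp
  ring

lemma Phi_one_pos (m : ℕ) : 0 < Phi m 1 := by
  rw [Phi_one_eq]
  have := denom_pos m (2 : ℝ)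
  positivity

lemma Phi_one_lt (m : ℕ) (hm : 1 ≤ m) : Phi m 1 < 1 / 4 := by
  have h2 : phi m 2 < 1 := phi_lt_one m hm 2
  have : Phi m 1 = phi m 2 / 4 := by
    rw [Phi, show (1:ℝ) + 1 = 2 by norm_num, show (1:ℝ) - 1 = 0 by norm_num, phi_zero]
    ring
  rw [this]; linarith

lemma sum_Phi_eq (m : ℕ) (y : ℝ) (L U : ℤ) (h : L ≤ U) :
    ∑ k ∈ Finset.Icc L U, Phi m (y - k) =
      (phi m (y - L + 1) + phi m (y - L) - phi m (y - U) - phi m (y - U - 1)) / 4 := by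
  obtain ⟨d, rfl⟩ : ∃ d : ℕ, U = L + d := ⟨(U - L).toNat, by omega⟩
  clear h
  induction d with
  | zero =>
      rw [show L + ((0 : ℕ) : ℤ) = L by omega, Finset.Icc_self, Finset.sum_singleton]
      simp only [Phi]
      ring
  | succ d ih =>
      have hU : L + ((d + 1 : ℕ) : ℤ) = (L + d) + 1 := by push_cast; ring
      rw [hU]
      have hins : Finset.Icc L ((L + d) + 1) = insert ((L + d) + 1) (Finset.Icc L (L + d)) := by
        ext k; simp only [Finset.mem_Icc, Finset.mem_insert]; omega
      rw [hins, Finset.sum_insert (by simp), ih]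
      simp only [Phi]
      push_cast
      ring_nf

lemma key (m : ℕ) (hm : 1 ≤ m) (y : ℝ) (L U : ℤ) (h : L ≤ U)
    (hcase : 0 ≤ y - U ∨ y - L ≤ 0) :
    1 - ∑ k ∈ Finset.Icc L U, Phi m (y - k) > Phi m 1 := by
  rw [sum_Phi_eq m y L U h]
  have hA : phi m (y - L + 1) < 1 := phi_lt_one m hm _
  have hB : phi m (y - L) < 1 := phi_lt_one m hm _
  have hC : -1 < phi m (y - U) := neg_one_lt_phi m hm _
  have hD : -1 < phi m (y - U - 1) := neg_one_lt_phi m hm _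
  have hP := Phi_one_lt m hm
  rcases hcase with hc | hc
  · have : 0 ≤ phi m (y - U) := phi_nonneg m hc
    linarith
  · have : phi m (y - L) ≤ 0 := phi_nonpos m hc
    linarith

theorem Phi_sum_not_tendsto_one (m : ℕ) (hm : 1 ≤ m) (a b : ℝ) (hab : a ≤ b) (n : ℕ)
    (hnab : ⌈(n : ℝ) * a⌉ ≤ ⌊(n : ℝ) * b⌋) :
    (1 - ∑ k ∈ Finset.Icc ⌈(n : ℝ) * a⌉ ⌊(n : ℝ) * b⌋, Phi m ((n : ℝ) * b - (k : ℝ)) >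
        Phi m 1) ∧
    Phi m 1 = 1 / (2 * ((1 : ℝ) + 2 ^ (2 * m)) ^ ((1 : ℝ) / (2 * m))) ∧
    0 < Phi m 1 ∧
    (1 - ∑ k ∈ Finset.Icc ⌈(n : ℝ) * a⌉ ⌊(n : ℝ) * b⌋, Phi m ((n : ℝ) * a - (k : ℝ)) >
        Phi m 1) ∧
    ∃ x ∈ Set.Icc a b,
      ¬ Tendsto
          (fun N : ℕ => ∑ k ∈ Finset.Icc ⌈(N : ℝ) * a⌉ ⌊(N : ℝ) * b⌋,
            Phi m ((N : ℝ) * x - (k : ℝ)))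
          atTop (nhds 1) := by
  have hb1 : (1 : ℝ) - ∑ k ∈ Finset.Icc ⌈(n : ℝ) * a⌉ ⌊(n : ℝ) * b⌋,
      Phi m ((n : ℝ) * b - (k : ℝ)) > Phi m 1 :=
    key m hm _ _ _ hnab (Or.inl (by
      have := Int.floor_le ((n : ℝ) * b); linarith))
  refine ⟨hb1, Phi_one_eq m, Phi_one_pos m, ?_, ?_⟩
  · exact key m hm _ _ _ hnab (Or.inr (by
      have := Int.le_ceil ((n : ℝ) * a); linarith))
  · refine ⟨b, ⟨hab, le_refl b⟩, fun hT => ?_⟩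
    have hbound : ∀ N : ℕ, ∑ k ∈ Finset.Icc ⌈(N : ℝ) * a⌉ ⌊(N : ℝ) * b⌋,
        Phi m ((N : ℝ) * b - (k : ℝ)) ≤ 1 - Phi m 1 := by
      intro N
      by_cases hN : ⌈(N : ℝ) * a⌉ ≤ ⌊(N : ℝ) * b⌋
      · have := key m hm ((N : ℝ) * b) _ _ hN (Or.inl (by
          have := Int.floor_le ((N : ℝ) * b); linarith))
        linarith
      · rw [Finset.Icc_eq_empty (by omega), Finset.sum_empty]
        have := Phi_one_lt m hm
        linarith
    have h1 : (1 : ℝ) - Phi m 1 < 1 := by linarith [Phi_one_pos m]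
    have := (hT.eventually (eventually_gt_nhds h1)).exists
    obtain ⟨N, hN⟩ := this
    exact absurd (hbound N) (not_le.mpr hN)
end

section
/- Let (X,‖·‖) be a Banach space, f ∈ C([a,b],X), m ∈ ℕ (m ≥ 1), 0 < α < 1, and n ∈ ℕ with n^{1−α} > 2 and ⌈na⌉ ≤ ⌊nb⌋. Then for every x ∈ [a,b], ‖A_n(f,x) − f(x)‖ ≤ (1 + 4^m)^{1/(2m)} [ 2ω₁(f, 1/n^α) + ‖f‖_∞/(m(n^{1−α} − 2)^{2m}) ]. -/
open scoped BigOperators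
open Real Filter

/-- First modulus of continuity of `f` on the set `s`, with step `δ`. -/
noncomputable def omega1 {X : Type*} [NormedAddCommGroup X] (f : ℝ → X) (s : Set ℝ)
    (δ : ℝ) : ℝ :=
  sSup {r : ℝ | ∃ x ∈ s, ∃ y ∈ s, |x - y| ≤ δ ∧ r = ‖f x - f y‖}

/-- Sup norm of `f` over a set `s`. -/
noncomputable def supNorm {X : Type*} [NormedAddCommGroup X] (f : ℝ → X) (s : Set ℝ) : ℝ :=
  ⨆ t : s, ‖f t‖

/-- The neural network operator `A_n` induced by the density `Φ`. -/
noncomputable def An {X : Type*} [NormedAddCommGroup X] [Module ℝ X]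
    (m : ℕ) (a b : ℝ) (n : ℕ) (f : ℝ → X) (x : ℝ) : X :=
  (∑ k ∈ Finset.Icc ⌈(n : ℝ) * a⌉ ⌊(n : ℝ) * b⌋, Phi m ((n : ℝ) * x - (k : ℝ)))⁻¹ •
    ∑ k ∈ Finset.Icc ⌈(n : ℝ) * a⌉ ⌊(n : ℝ) * b⌋,
      Phi m ((n : ℝ) * x - (k : ℝ)) • f ((k : ℝ) / n)

/-!
`Φ` is a nonnegative bump with `Φ ≥ 1/(2C)` on `[-1, 1]`, where `C = (1 + 4^m)^(1/(2m))`, and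
its integer translates telescope, so by Bernoulli's inequality the mass of `Φ(nx - k)` on
`|nx - k| > n^(1-α)` is at most `1/(4m(n^(1-α) - 2)^(2m))` on each side. `A_n(f, x) - f(x)` is a
`Φ`-weighted average of `f(k/n) - f(x)`: near terms are at most `ω₁(f, n^(-α))`, far ones at most
`2‖f‖_∞`. If both tails are nonempty the denominator contains the two nodes adjacent to `nx` and is
at least `1/C`, otherwise it is at least `1/(2C)`; either way the far terms contribute at most
`C‖f‖_∞/(m(n^(1-α) - 2)^(2m))`.
-/

open Finset

lemma one_div_two_mul_eq_inv_natCast (m : ℕ) : (1 : ℝ) / (2 * m) = ((2 * m : ℕ) : ℝ)⁻¹ := by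
  push_cast
  exact one_div _

lemma phi_denom_pos (m : ℕ) (x : ℝ) : 0 < (1 + x ^ (2 * m)) ^ ((1 : ℝ) / (2 * m)) := by
  have := (even_two_mul m).pow_nonneg x
  positivity

lemma abs_le_phi_denom {m : ℕ} (hm : m ≠ 0) (x : ℝ) :
    |x| ≤ (1 + x ^ (2 * m)) ^ ((1 : ℝ) / (2 * m)) := by
  rw [one_div_two_mul_eq_inv_natCast]
  calc |x| = (|x| ^ (2 * m)) ^ ((2 * m : ℕ) : ℝ)⁻¹ :=
        (pow_rpow_inv_natCast (abs_nonneg x) (by omega)).symm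
    _ ≤ (1 + x ^ (2 * m)) ^ ((2 * m : ℕ) : ℝ)⁻¹ := by
        have := (even_two_mul m).pow_nonneg x
        rw [(even_two_mul m).pow_abs]
        exact rpow_le_rpow this (by linarith) (by positivity)

lemma abs_phi_le_one {m : ℕ} (hm : m ≠ 0) (x : ℝ) : |phi m x| ≤ 1 := by
  rw [phi, abs_div, abs_of_pos (phi_denom_pos m x), div_le_one (phi_denom_pos m x)]
  exact abs_le_phi_denom hm x

lemma phi_neg (m : ℕ) (x : ℝ) : phi m (-x) = -phi m x := by
  rw [phi, phi, (even_two_mul m).neg_pow, neg_div]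

lemma phi_le_phi_of_nonneg {m : ℕ} (hm : m ≠ 0) {u v : ℝ} (hu : 0 ≤ u) (huv : u ≤ v) :
    phi m u ≤ phi m v := by
  have hv : 0 ≤ v := hu.trans huv
  rw [phi, phi, div_le_div_iff₀ (phi_denom_pos m u) (phi_denom_pos m v),
    ← pow_le_pow_iff_left₀ (by positivity) (by positivity) (by omega : 2 * m ≠ 0),
    mul_pow, mul_pow, one_div_two_mul_eq_inv_natCast,
    rpow_inv_natCast_pow (by positivity) (by omega),
    rpow_inv_natCast_pow (by positivity) (by omega)]
  have := pow_le_pow_left₀ hu huv (2 * m)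
  linarith

lemma monotone_phi {m : ℕ} (hm : m ≠ 0) : Monotone (phi m) := by
  intro u v huv
  rcases le_total 0 u with hu | hu
  · exact phi_le_phi_of_nonneg hm hu huv
  rcases le_total 0 v with hv | hv
  · exact (div_nonpos_of_nonpos_of_nonneg hu (phi_denom_pos m u).le).trans
      (div_nonneg hv (phi_denom_pos m v).le)
  · have := phi_le_phi_of_nonneg hm (neg_nonneg.mpr hv) (neg_le_neg huv)
    rwa [phi_neg, phi_neg, neg_le_neg_iff] at this

lemma Phi_nonneg {m : ℕ} (hm : m ≠ 0) (t : ℝ) : 0 ≤ Phi m t := by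
  have := monotone_phi hm (by linarith : t - 1 ≤ t + 1)
  rw [Phi]
  linarith

/-- Bernoulli's inequality applied to `φ(s) = (1 + s^(-2m))^(-1/(2m))`. -/
lemma one_sub_phi_le {m : ℕ} (hm : m ≠ 0) {δ s : ℝ} (hδ : 0 < δ) (hs : δ ≤ s) :
    1 - phi m s ≤ (2 * m * δ ^ (2 * m))⁻¹ := by
  have hs0 : 0 < s := hδ.trans_le hs
  have hm0 : (0 : ℝ) < m := by positivity
  set r : ℝ := 1 / (2 * m) with hr
  set u : ℝ := (s ^ (2 * m))⁻¹ with hu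
  have hu0 : 0 ≤ u := by positivity
  have hr1 : r ≤ 1 := by
    rw [hr, div_le_one (by positivity)]
    have : (1 : ℝ) ≤ m := by exact_mod_cast Nat.one_le_iff_ne_zero.mpr hm
    linarith
  have hdenom : (1 + s ^ (2 * m)) ^ r ≤ s * (1 + r * u) := by
    calc (1 + s ^ (2 * m)) ^ r = (s ^ (2 * m) * (1 + u)) ^ r := by
          rw [mul_add, mul_one, hu, mul_inv_cancel₀ (by positivity), add_comm]
      _ = s * (1 + u) ^ r := by
          rw [mul_rpow (by positivity) (by positivity), hr, one_div_two_mul_eq_inv_natCast,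
            pow_rpow_inv_natCast hs0.le (by omega)]
      _ ≤ s * (1 + r * u) := by
          gcongr
          exact rpow_one_add_le_one_add_mul_self (by linarith) (by positivity) hr1
  have hphi : 1 - r * u ≤ phi m s := by
    have hru : 0 ≤ r * u := by positivity
    calc 1 - r * u ≤ 1 / (1 + r * u) := by
          rw [le_div_iff₀ (by positivity)]
          nlinarith
      _ = s / (s * (1 + r * u)) := by field_simp
      _ ≤ phi m s := div_le_div_of_nonneg_left hs0.le (phi_denom_pos m s) hdenom
  have hδs : r * u ≤ (2 * m * δ ^ (2 * m))⁻¹ := by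
    rw [hr, hu, one_div, ← mul_inv]
    gcongr
  linarith

lemma div_le_phi (m : ℕ) {u : ℝ} (h0 : 0 ≤ u) (h2 : u ≤ 2) :
    u / ((1 : ℝ) + 4 ^ m) ^ ((1 : ℝ) / (2 * m)) ≤ phi m u := by
  refine div_le_div_of_nonneg_left h0 (phi_denom_pos m u) ?_
  gcongr
  calc u ^ (2 * m) ≤ 2 ^ (2 * m) := by gcongr
    _ = 4 ^ m := by rw [pow_mul]; norm_num

lemma inv_two_mul_le_Phi (m : ℕ) {t : ℝ} (ht : |t| ≤ 1) :
    (2 * ((1 : ℝ) + 4 ^ m) ^ ((1 : ℝ) / (2 * m)))⁻¹ ≤ Phi m t := by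
  rw [abs_le] at ht
  have hC : 0 < ((1 : ℝ) + 4 ^ m) ^ ((1 : ℝ) / (2 * m)) := by positivity
  have h₁ := div_le_phi m (u := t + 1) (by linarith) (by linarith)
  have h₂ := div_le_phi m (u := 1 - t) (by linarith) (by linarith)
  rw [Phi, show t - 1 = -(1 - t) by ring, phi_neg]
  calc (2 * ((1 : ℝ) + 4 ^ m) ^ ((1 : ℝ) / (2 * m)))⁻¹
      = ((t + 1) / ((1 : ℝ) + 4 ^ m) ^ ((1 : ℝ) / (2 * m))
          + (1 - t) / ((1 : ℝ) + 4 ^ m) ^ ((1 : ℝ) / (2 * m))) / 4 := by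
        field_simp
        ring
    _ ≤ _ := by linarith

lemma sum_Icc_sub_int {M : Type*} [AddCommGroup M] (g : ℤ → M) {p q : ℤ}
    (h : p ≤ q + 1) : ∑ k ∈ Icc p q, (g (k + 1) - g k) = g (q + 1) - g p := by
  replace h : p - 1 ≤ q := by omega
  induction q, h using Int.leInduction with
  | base => simp
  | succ q hq ih =>
    rw [← insert_Icc_right_eq_Icc_add_one (by omega), sum_insert (by simp), ih]
    abel

lemma sum_Icc_Phi (m : ℕ) (y : ℝ) {p q : ℤ} (h : p ≤ q + 1) :
    ∑ k ∈ Icc p q, Phi m (y - k) =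
      (phi m (y - p + 1) + phi m (y - p) - phi m (y - q) - phi m (y - q - 1)) / 4 := by
  set g : ℤ → ℝ := fun k ↦ -(phi m (y - k + 1) + phi m (y - k)) / 4
  have hg : ∀ k : ℤ, Phi m (y - k) = g (k + 1) - g k := by
    intro k
    simp only [Phi, g, Int.cast_add, Int.cast_one, sub_add_eq_sub_sub, sub_add_cancel]
    ring
  rw [sum_congr rfl fun k _ ↦ hg k, sum_Icc_sub_int g h]
  simp only [g, Int.cast_add, Int.cast_one, sub_add_eq_sub_sub, sub_add_cancel]
  ring

lemma sum_Icc_Phi_le_of_le_sub {m : ℕ} (hm : m ≠ 0) {y δ : ℝ} (hδ : 0 < δ) (p : ℤ) {q : ℤ}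
    (hq : δ + 1 ≤ y - q) : ∑ k ∈ Icc p q, Phi m (y - k) ≤ (4 * m * δ ^ (2 * m))⁻¹ := by
  rcases lt_or_ge q p with hqp | hpq
  · rw [Icc_eq_empty_of_lt hqp, sum_empty]
    positivity
  rw [sum_Icc_Phi m y (by omega)]
  have h₁ := one_sub_phi_le hm hδ (s := y - q) (by linarith)
  have h₂ := one_sub_phi_le hm hδ (s := y - q - 1) (by linarith)
  have h₃ := (abs_le.mp (abs_phi_le_one hm (y - p + 1))).2
  have h₄ := (abs_le.mp (abs_phi_le_one hm (y - p))).2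
  have : (4 * m * δ ^ (2 * m))⁻¹ = (2 * m * δ ^ (2 * m))⁻¹ / 2 := by
    field_simp
    ring
  linarith

lemma sum_Icc_Phi_le_of_add_le {m : ℕ} (hm : m ≠ 0) {y δ : ℝ} (hδ : 0 < δ) {p : ℤ} (q : ℤ)
    (hp : y + δ + 1 ≤ p) : ∑ k ∈ Icc p q, Phi m (y - k) ≤ (4 * m * δ ^ (2 * m))⁻¹ := by
  rcases lt_or_ge q p with hqp | hpq
  · rw [Icc_eq_empty_of_lt hqp, sum_empty]
    positivity
  rw [sum_Icc_Phi m y (by omega), show y - p + 1 = -(p - y - 1) by ring,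
    show y - (p : ℝ) = -(p - y) by ring, phi_neg, phi_neg]
  have h₁ := one_sub_phi_le hm hδ (s := p - y - 1) (by linarith)
  have h₂ := one_sub_phi_le hm hδ (s := p - y) (by linarith)
  have h₃ := (abs_le.mp (abs_phi_le_one hm (y - q))).1
  have h₄ := (abs_le.mp (abs_phi_le_one hm (y - q - 1))).1
  have : (4 * m * δ ^ (2 * m))⁻¹ = (2 * m * δ ^ (2 * m))⁻¹ / 2 := by
    field_simp
    ring
  linarith

lemma inv_two_mul_le_sum_Phi {m : ℕ} (hm : m ≠ 0) {L U : ℤ} {y : ℝ} (hLU : L ≤ U)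
    (hL : L ≤ y + 1) (hU : y < U + 1) :
    (2 * ((1 : ℝ) + 4 ^ m) ^ ((1 : ℝ) / (2 * m)))⁻¹ ≤ ∑ k ∈ Icc L U, Phi m (y - k) := by
  have hfloor : ⌊y⌋ ≤ U := Int.floor_le_iff.mpr (by exact_mod_cast hU)
  have hnear : |y - (max L ⌊y⌋ : ℤ)| ≤ 1 := by
    rw [abs_le]
    rcases le_total L ⌊y⌋ with h | h
    · rw [max_eq_right h]
      constructor <;> linarith [Int.floor_le y, Int.lt_floor_add_one y]
    · rw [max_eq_left h]
      have : (⌊y⌋ : ℝ) ≤ L := by exact_mod_cast h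
      constructor <;> linarith [Int.lt_floor_add_one y]
  calc _ ≤ Phi m (y - (max L ⌊y⌋ : ℤ)) := inv_two_mul_le_Phi m hnear
    _ ≤ ∑ k ∈ Icc L U, Phi m (y - k) :=
        single_le_sum (f := fun k : ℤ ↦ Phi m (y - k)) (fun k _ ↦ Phi_nonneg hm (y - k))
          (mem_Icc.mpr ⟨le_max_left _ _, max_le hLU hfloor⟩)

lemma inv_le_sum_Phi {m : ℕ} (hm : m ≠ 0) {L U : ℤ} {y : ℝ} (hL : L ≤ ⌊y⌋) (hU : ⌊y⌋ + 1 ≤ U) :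
    (((1 : ℝ) + 4 ^ m) ^ ((1 : ℝ) / (2 * m)))⁻¹ ≤ ∑ k ∈ Icc L U, Phi m (y - k) := by
  have hpair : ({⌊y⌋, ⌊y⌋ + 1} : Finset ℤ) ⊆ Icc L U := by
    intro k hk
    rcases mem_insert.mp hk with rfl | hk
    · exact mem_Icc.mpr ⟨hL, by omega⟩
    · rw [mem_singleton.mp hk]
      exact mem_Icc.mpr ⟨by omega, hU⟩
  have h₁ := inv_two_mul_le_Phi m (t := y - ⌊y⌋)
    (abs_le.mpr ⟨by linarith [Int.floor_le y], by linarith [Int.lt_floor_add_one y]⟩)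
  have h₂ := inv_two_mul_le_Phi m (t := y - (⌊y⌋ + 1 : ℤ)) (abs_le.mpr
    ⟨by push_cast; linarith [Int.floor_le y], by push_cast; linarith [Int.lt_floor_add_one y]⟩)
  calc (((1 : ℝ) + 4 ^ m) ^ ((1 : ℝ) / (2 * m)))⁻¹
      ≤ Phi m (y - ⌊y⌋) + Phi m (y - (⌊y⌋ + 1 : ℤ)) := by
        rw [mul_inv] at h₁ h₂
        linarith
    _ = ∑ k ∈ {⌊y⌋, ⌊y⌋ + 1}, Phi m (y - k) :=
        (sum_pair (f := fun k : ℤ ↦ Phi m (y - k)) (by omega)).symm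
    _ ≤ ∑ k ∈ Icc L U, Phi m (y - k) :=
        sum_le_sum_of_subset_of_nonneg hpair fun k _ _ ↦ Phi_nonneg hm _

lemma sum_filter_far_Phi_le_add {m : ℕ} (hm : m ≠ 0) (L U : ℤ) (y : ℝ) {l : ℝ} (hl : 0 < l) :
    ∑ k ∈ Icc L U with l < |y - ((k : ℤ) : ℝ)|, Phi m (y - k) ≤
      (∑ k ∈ Icc L ⌊y - l⌋, Phi m (y - k)) + ∑ k ∈ Icc ⌈y + l⌉ U, Phi m (y - k) := by
  have hsub : {k ∈ Icc L U | l < |y - ((k : ℤ) : ℝ)|} ⊆ Icc L ⌊y - l⌋ ∪ Icc ⌈y + l⌉ U := by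
    intro k hk
    simp only [mem_filter, mem_Icc, mem_union] at hk ⊢
    rcases lt_abs.mp hk.2 with h | h
    · exact Or.inl ⟨hk.1.1, Int.le_floor.mpr (by linarith)⟩
    · exact Or.inr ⟨Int.ceil_le.mpr (by linarith), hk.1.2⟩
  have hdisj : Disjoint (Icc L ⌊y - l⌋) (Icc ⌈y + l⌉ U) := by
    refine disjoint_left.mpr fun k h₁ h₂ ↦ ?_
    have := Int.le_floor.mp (mem_Icc.mp h₁).2
    have := Int.ceil_le.mp (mem_Icc.mp h₂).1
    linarith
  rw [← sum_union hdisj]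
  exact sum_le_sum_of_subset_of_nonneg hsub fun k _ _ ↦ Phi_nonneg hm _

lemma sum_filter_far_Phi_le {m : ℕ} (hm : m ≠ 0) {L U : ℤ} {y l : ℝ} (hl : 2 < l)
    (hV : (2 * ((1 : ℝ) + 4 ^ m) ^ ((1 : ℝ) / (2 * m)))⁻¹ ≤ ∑ k ∈ Icc L U, Phi m (y - k)) :
    ∑ k ∈ Icc L U with l < |y - ((k : ℤ) : ℝ)|, Phi m (y - k) ≤
      ((1 : ℝ) + 4 ^ m) ^ ((1 : ℝ) / (2 * m)) / (2 * m * (l - 2) ^ (2 * m)) *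
        ∑ k ∈ Icc L U, Phi m (y - k) := by
  set C := ((1 : ℝ) + 4 ^ m) ^ ((1 : ℝ) / (2 * m))
  set R := C / (2 * m * (l - 2) ^ (2 * m)) with hR
  set β := (4 * m * (l - 2) ^ (2 * m))⁻¹ with hβ
  have hC : 0 < C := by positivity
  have hδ : 0 < l - 2 := by linarith
  have hfar := sum_filter_far_Phi_le_add hm L U y (by linarith : 0 < l)
  have hleft := sum_Icc_Phi_le_of_le_sub hm hδ L (y := y) (q := ⌊y - l⌋)
    (by linarith [Int.floor_le (y - l)])
  have hright := sum_Icc_Phi_le_of_add_le hm hδ U (y := y) (p := ⌈y + l⌉)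
    (by linarith [Int.le_ceil (y + l)])
  by_cases hboth : L ≤ ⌊y - l⌋ ∧ ⌈y + l⌉ ≤ U
  · -- both tails are nonempty, so `⌊y⌋` and `⌊y⌋ + 1` both lie in `[L, U]`
    have hfloor : ⌊y⌋ + 1 ≤ ⌈y + l⌉ := by
      have : ((⌊y⌋ + 1 : ℤ) : ℝ) ≤ ⌈y + l⌉ := by
        push_cast
        linarith [Int.floor_le y, Int.le_ceil (y + l)]
      exact_mod_cast this
    have hV₂ := inv_le_sum_Phi hm (hboth.1.trans (Int.floor_mono (by linarith)))
      (hfloor.trans hboth.2)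
    calc _ ≤ β + β := by linarith
      _ = R * C⁻¹ := by rw [hβ, hR]; field_simp; ring
      _ ≤ R * ∑ k ∈ Icc L U, Phi m (y - k) := by gcongr
  · have hone : (∑ k ∈ Icc L ⌊y - l⌋, Phi m (y - k)) + ∑ k ∈ Icc ⌈y + l⌉ U, Phi m (y - k) ≤ β := by
      rcases not_and_or.mp hboth with h | h
      · rw [Icc_eq_empty h, sum_empty, zero_add]
        exact hright
      · rw [Icc_eq_empty h, sum_empty, add_zero]
        exact hleft
    calc _ ≤ β := hfar.trans hone
      _ = R * (2 * C)⁻¹ := by rw [hβ, hR]; field_simp; ring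
      _ ≤ R * ∑ k ∈ Icc L U, Phi m (y - k) := by gcongr

lemma norm_inv_sum_smul_sum_sub_le {ι X : Type*} [NormedAddCommGroup X] [NormedSpace ℝ X]
    (s : Finset ι) (w : ι → ℝ) (g : ι → X) (v : X) (p : ι → Prop) [DecidablePred p] {ε M : ℝ}
    (hw : ∀ i ∈ s, 0 ≤ w i) (hW : 0 < ∑ i ∈ s, w i) (hε : 0 ≤ ε)
    (hnear : ∀ i ∈ s, ¬ p i → ‖g i - v‖ ≤ ε) (hall : ∀ i ∈ s, ‖g i - v‖ ≤ M) :
    ‖(∑ i ∈ s, w i)⁻¹ • ∑ i ∈ s, w i • g i - v‖ ≤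
      ε + M * (∑ i ∈ s with p i, w i) / ∑ i ∈ s, w i := by
  set W := ∑ i ∈ s, w i
  have hdiff : W⁻¹ • ∑ i ∈ s, w i • g i - v = W⁻¹ • ∑ i ∈ s, w i • (g i - v) := by
    simp only [smul_sub, sum_sub_distrib, ← sum_smul]
    rw [inv_smul_smul₀ hW.ne']
  have hterm : ∀ i ∈ s, ‖w i • (g i - v)‖ ≤ w i * ε + M * (if p i then w i else 0) := by
    intro i hi
    rw [norm_smul, Real.norm_of_nonneg (hw i hi)]
    split_ifs with h
    · nlinarith [hall i hi, hw i hi]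
    · nlinarith [hnear i hi h, hw i hi]
  calc ‖W⁻¹ • ∑ i ∈ s, w i • g i - v‖ = W⁻¹ * ‖∑ i ∈ s, w i • (g i - v)‖ := by
        rw [hdiff, norm_smul, norm_inv, Real.norm_of_nonneg hW.le]
    _ ≤ W⁻¹ * (W * ε + M * ∑ i ∈ s with p i, w i) := by
        gcongr
        calc _ ≤ ∑ i ∈ s, ‖w i • (g i - v)‖ := norm_sum_le _ _
          _ ≤ ∑ i ∈ s, (w i * ε + M * (if p i then w i else 0)) := sum_le_sum hterm
          _ = W * ε + M * ∑ i ∈ s with p i, w i := by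
              rw [sum_add_distrib, ← sum_mul, ← mul_sum, sum_filter]
    _ = ε + M * (∑ i ∈ s with p i, w i) / W := by
        field_simp

section BoundedOn

variable {X : Type*} [NormedAddCommGroup X] {f : ℝ → X} {s : Set ℝ} {B : ℝ}

lemma norm_le_supNorm (hB : ∀ x ∈ s, ‖f x‖ ≤ B) {x : ℝ} (hx : x ∈ s) :
    ‖f x‖ ≤ supNorm f s :=
  le_ciSup (f := fun t : s ↦ ‖f t‖) ⟨B, by rintro _ ⟨t, rfl⟩; exact hB t t.2⟩ ⟨x, hx⟩

lemma norm_sub_le_omega1 (hB : ∀ x ∈ s, ‖f x‖ ≤ B) {δ x y : ℝ} (hx : x ∈ s) (hy : y ∈ s)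
    (hxy : |x - y| ≤ δ) : ‖f x - f y‖ ≤ omega1 f s δ := by
  refine le_csSup ⟨2 * B, ?_⟩ ⟨x, hx, y, hy, hxy, rfl⟩
  rintro _ ⟨u, hu, v, hv, -, rfl⟩
  linarith [norm_sub_le (f u) (f v), hB u hu, hB v hv]

lemma omega1_nonneg (hB : ∀ x ∈ s, ‖f x‖ ≤ B) {δ x : ℝ} (hδ : 0 ≤ δ) (hx : x ∈ s) :
    0 ≤ omega1 f s δ := by
  simpa using norm_sub_le_omega1 hB hx hx (by simpa using hδ)

end BoundedOn

lemma intCast_div_mem_Icc {a b : ℝ} {n : ℕ} (hn : 0 < n) {k : ℤ}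
    (hk : k ∈ Icc ⌈(n : ℝ) * a⌉ ⌊(n : ℝ) * b⌋) : (k : ℝ) / n ∈ Set.Icc a b := by
  have hn' : (0 : ℝ) < n := by exact_mod_cast hn
  obtain ⟨ha, hb⟩ := mem_Icc.mp hk
  constructor
  · rw [le_div_iff₀ hn', mul_comm]
    exact Int.ceil_le.mp ha
  · rw [div_le_iff₀ hn', mul_comm]
    exact Int.le_floor.mp hb

lemma abs_intCast_div_sub_le {n : ℕ} (hn : 0 < n) {α x : ℝ} {k : ℤ}
    (hk : |n * x - k| ≤ (n : ℝ) ^ (1 - α)) : |(k : ℝ) / n - x| ≤ 1 / (n : ℝ) ^ α := by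
  have hn' : (0 : ℝ) < n := by exact_mod_cast hn
  rw [show (k : ℝ) / n - x = -((n * x - k) / n) by field_simp; ring, abs_neg, abs_div,
    abs_of_pos hn', div_le_iff₀ hn']
  calc |n * x - k| ≤ (n : ℝ) ^ (1 - α) := hk
    _ = 1 / (n : ℝ) ^ α * n := by
        rw [rpow_sub hn', rpow_one]
        ring

lemma norm_An_sub_le {X : Type*} [NormedAddCommGroup X] [NormedSpace ℝ X] {a b B : ℝ}
    {f : ℝ → X} (hB : ∀ x ∈ Set.Icc a b, ‖f x‖ ≤ B) {m n : ℕ} (hm : m ≠ 0) (hn : 0 < n) {α : ℝ}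
    (hl : 2 < (n : ℝ) ^ (1 - α)) (hnab : ⌈(n : ℝ) * a⌉ ≤ ⌊(n : ℝ) * b⌋) {x : ℝ}
    (hx : x ∈ Set.Icc a b) :
    ‖An m a b n f x - f x‖ ≤ omega1 f (Set.Icc a b) (1 / (n : ℝ) ^ α) +
      2 * supNorm f (Set.Icc a b) * (((1 : ℝ) + 4 ^ m) ^ ((1 : ℝ) / (2 * m)) /
        (2 * m * ((n : ℝ) ^ (1 - α) - 2) ^ (2 * m))) := by
  have hn' : (0 : ℝ) < n := by exact_mod_cast hn
  set K := Icc ⌈(n : ℝ) * a⌉ ⌊(n : ℝ) * b⌋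
  have hV := inv_two_mul_le_sum_Phi hm hnab (y := n * x)
    (by linarith [Int.ceil_lt_add_one ((n : ℝ) * a), mul_le_mul_of_nonneg_left hx.1 hn'.le])
    (by linarith [Int.lt_floor_add_one ((n : ℝ) * b), mul_le_mul_of_nonneg_left hx.2 hn'.le])
  have hV0 : 0 < ∑ k ∈ K, Phi m (n * x - k) := lt_of_lt_of_le (by positivity) hV
  have hS : 0 ≤ 2 * supNorm f (Set.Icc a b) := by
    linarith [(norm_nonneg _).trans (norm_le_supNorm hB hx)]
  calc ‖An m a b n f x - f x‖
      ≤ omega1 f (Set.Icc a b) (1 / (n : ℝ) ^ α) + 2 * supNorm f (Set.Icc a b) *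
          (∑ k ∈ K with (n : ℝ) ^ (1 - α) < |n * x - ((k : ℤ) : ℝ)|, Phi m (n * x - k)) /
            ∑ k ∈ K, Phi m (n * x - k) :=
        norm_inv_sum_smul_sum_sub_le K _ (fun k : ℤ ↦ f (k / n)) (f x) _
          (fun k _ ↦ Phi_nonneg hm _) hV0 (omega1_nonneg hB (by positivity) hx)
          (fun k hk hnear ↦ norm_sub_le_omega1 hB (intCast_div_mem_Icc hn hk) hx
            (abs_intCast_div_sub_le hn (not_lt.mp hnear)))
          (fun k hk ↦ by linarith [norm_sub_le (f (k / n)) (f x),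
            norm_le_supNorm hB (intCast_div_mem_Icc hn hk), norm_le_supNorm hB hx])
    _ ≤ _ := by
        rw [mul_div_assoc]
        gcongr _ + _ * ?_
        exact (div_le_iff₀ hV0).mpr (sum_filter_far_Phi_le hm hl hV)

theorem An_approx_continuous_general {X : Type*} [NormedAddCommGroup X] [NormedSpace ℝ X]
    (a b : ℝ) (f : ℝ → X)
    (hf : ContinuousOn f (Set.Icc a b)) (m : ℕ) (hm : 1 ≤ m)
    (α : ℝ) (n : ℕ) (hn : 2 < (n : ℝ) ^ (1 - α))
    (hnab : ⌈(n : ℝ) * a⌉ ≤ ⌊(n : ℝ) * b⌋) :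
    ∀ x ∈ Set.Icc a b,
      ‖An m a b n f x - f x‖ ≤
        ((1 : ℝ) + 4 ^ m) ^ ((1 : ℝ) / (2 * m)) *
          (2 * omega1 f (Set.Icc a b) (1 / (n : ℝ) ^ α) +
            supNorm f (Set.Icc a b) / (m * ((n : ℝ) ^ (1 - α) - 2) ^ (2 * m))) := by
  intro x hx
  have hn0 : 0 < n := Nat.pos_of_ne_zero fun h ↦ by
    rw [h, Nat.cast_zero] at hn
    linarith [zero_rpow_le_one (1 - α)]
  obtain ⟨B, hB⟩ := isCompact_Icc.exists_bound_of_continuousOn hf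
  have hC : (1 : ℝ) ≤ ((1 : ℝ) + 4 ^ m) ^ ((1 : ℝ) / (2 * m)) :=
    one_le_rpow (le_add_of_nonneg_right (by positivity)) (by positivity)
  have hω := omega1_nonneg hB (by positivity : 0 ≤ 1 / (n : ℝ) ^ α) hx
  have hl : 0 < ((n : ℝ) ^ (1 - α) - 2) ^ (2 * m) := pow_pos (by linarith) _
  have hm0 : (m : ℝ) ≠ 0 := by positivity
  calc ‖An m a b n f x - f x‖ ≤ _ := norm_An_sub_le hB (by omega) hn0 hn hnab hx
    _ = omega1 f (Set.Icc a b) (1 / (n : ℝ) ^ α) +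
          ((1 : ℝ) + 4 ^ m) ^ ((1 : ℝ) / (2 * m)) *
            (supNorm f (Set.Icc a b) / (m * ((n : ℝ) ^ (1 - α) - 2) ^ (2 * m))) := by
        field_simp
    _ ≤ _ := by nlinarith

theorem An_approx_continuous {X : Type*} [NormedAddCommGroup X] [NormedSpace ℝ X]
    [CompleteSpace X] (a b : ℝ) (hab : a ≤ b) (f : ℝ → X)
    (hf : ContinuousOn f (Set.Icc a b)) (m : ℕ) (hm : 1 ≤ m)
    (α : ℝ) (hα0 : 0 < α) (hα1 : α < 1) (n : ℕ) (hn : 2 < (n : ℝ) ^ (1 - α))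
    (hnab : ⌈(n : ℝ) * a⌉ ≤ ⌊(n : ℝ) * b⌋) :
    ∀ x ∈ Set.Icc a b,
      ‖An m a b n f x - f x‖ ≤
        ((1 : ℝ) + 4 ^ m) ^ ((1 : ℝ) / (2 * m)) *
          (2 * omega1 f (Set.Icc a b) (1 / (n : ℝ) ^ α) +
            supNorm f (Set.Icc a b) / (m * ((n : ℝ) ^ (1 - α) - 2) ^ (2 * m))) :=
  An_approx_continuous_general a b f hf m hm α n hn hnab
end
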